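/- For every nonnegative integer n, n/2 ≤ D(n) ≤ n (i.e., n ≤ 2·D(n) and D(n) ≤ n). -/

import Mathlib

/-!
Splitting `1, …, 2n + 1` into `1` and the pairs `2k, 2k + 1` gives `D (2n + 1) = 2 D n + 1`, since
`f (2k) + f (2k + 1) = 2 f k`; subtracting `f (2n + 3) = f (n + 1) + 1` then gives
`D (2n + 2) = D (n + 1) + D n`. Both bounds now follow by strong induction on `n`; in the even case
the lower bound first comes out one short, and is restored by parity.
-/

/-- f m = (#1 digits) - (#0 digits) in the binary expansion of m. -/
def f (m : ℕ) : ℤ :=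
  2 * ((Nat.digits 2 m).count 1 : ℤ) - ((Nat.digits 2 m).length : ℤ)

/-- Cumulated deficient binary digit sum (OEIS A268289), D 0 = 0. -/
def D (n : ℕ) : ℤ := ∑ m ∈ Finset.Icc 1 n, f m

lemma f_two_mul_add_one (n : ℕ) : f (2 * n + 1) = f n + 1 := by
  have hdigits : Nat.digits 2 (2 * n + 1) = 1 :: Nat.digits 2 n := by
    rw [← Nat.digits_add 2 one_lt_two 1 n one_lt_two (Or.inl one_ne_zero)]
    ring_nf
  simp only [f, hdigits, List.count_cons_self, List.length_cons]
  push_cast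
  ring

lemma f_two_mul {n : ℕ} (hn : n ≠ 0) : f (2 * n) = f n - 1 := by
  have hdigits : Nat.digits 2 (2 * n) = 0 :: Nat.digits 2 n := by
    rw [← Nat.digits_add 2 one_lt_two 0 n two_pos (Or.inr hn), zero_add]
  simp only [f, hdigits, List.length_cons, List.count_cons, zero_ne_one, beq_iff_eq, if_false]
  push_cast
  ring

@[simp]
lemma D_zero : D 0 = 0 := rfl

lemma D_succ (n : ℕ) : D (n + 1) = D n + f (n + 1) :=
  Finset.sum_Icc_succ_top (Nat.le_add_left 1 n) f

lemma D_two_mul_add_one (n : ℕ) : D (2 * n + 1) = 2 * D n + 1 := by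
  induction n with
  | zero => simp [D_succ, f]
  | succ n ih =>
    have hodd : f (2 * n + 1 + 1 + 1) = f (n + 1) + 1 := f_two_mul_add_one (n + 1)
    have heven : f (2 * n + 1 + 1) = f (n + 1) - 1 := f_two_mul n.succ_ne_zero
    show D (2 * n + 1 + 1 + 1) = 2 * D (n + 1) + 1
    linarith [D_succ (2 * n + 1), D_succ (2 * n + 1 + 1), D_succ n]

lemma D_two_mul_add_two (n : ℕ) : D (2 * n + 2) = D (n + 1) + D n := by
  have hodd : D (2 * n + 2 + 1) = 2 * D (n + 1) + 1 := D_two_mul_add_one (n + 1)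
  have hf : f (2 * n + 2 + 1) = f (n + 1) + 1 := f_two_mul_add_one (n + 1)
  linarith [D_succ (2 * n + 2), D_succ n]

theorem stmt_19 (n : ℕ) : (n : ℤ) ≤ 2 * D n ∧ D n ≤ n := by
  induction n using Nat.strong_induction_on with
  | _ n ih =>
    obtain ⟨k, rfl | rfl⟩ := Nat.even_or_odd' n
    · rcases k with _ | k
      · simp
      · obtain ⟨hlo₁, hhi₁⟩ := ih (k + 1) (by omega)
        obtain ⟨hlo₀, hhi₀⟩ := ih k (by omega)
        rw [show 2 * (k + 1) = 2 * k + 2 by ring, D_two_mul_add_two]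
        push_cast at *
        omega
    · obtain ⟨hlo, hhi⟩ := ih k (by omega)
      rw [D_two_mul_add_one]
      push_cast
      omega
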